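/- arXiv:0810.5364 — 2 statements merged into one kernel-verified Lean document; each statement's English description precedes it below -/
import Mathlib

section
/- Let X be a nonempty compact Hausdorff space, φ : X → X a homeomorphism, x ∈ X, and f₀, …, f_N ∈ C(X, ℂ). Then ‖Σ_{n=0}^{N} Wⁿ Π_x(fₙ)‖ = sup{‖Σ_{n=0}^{N} Sⁿ π_y(fₙ)‖ : y = φᵏ(x) for some k ∈ ℤ}, where the norms are the operator norms on ℓ²(ℤ, ℂ) and ℓ²(ℕ, ℂ) respectively. -/
open scoped ENNReal

section DiagOp

variable {I : Type*}

theorem diag_pointwise_bound {d : I → ℂ} {C : ℝ} (hC : ∀ i, ‖d i‖ ≤ C)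
    (z : I → ℂ) (i : I) :
    ‖d i * z i‖ ^ (2 : ℝ≥0∞).toReal ≤
      (max C 0) ^ (2 : ℝ≥0∞).toReal * ‖z i‖ ^ (2 : ℝ≥0∞).toReal := by
  calc ‖d i * z i‖ ^ (2 : ℝ≥0∞).toReal
      = (‖d i‖ * ‖z i‖) ^ (2 : ℝ≥0∞).toReal := by rw [norm_mul]
    _ ≤ (max C 0 * ‖z i‖) ^ (2 : ℝ≥0∞).toReal :=
        Real.rpow_le_rpow (by positivity)
          (mul_le_mul_of_nonneg_right ((hC i).trans (le_max_left _ _)) (norm_nonneg _))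
          (by norm_num)
    _ = _ := Real.mul_rpow (le_max_right C 0) (norm_nonneg _)

theorem memℓp_diag_mul {d : I → ℂ} {C : ℝ} (hC : ∀ i, ‖d i‖ ≤ C)
    (z : lp (fun _ : I => ℂ) 2) : Memℓp (fun i => d i * z i) 2 := by
  have h2 : (0 : ℝ) < (2 : ℝ≥0∞).toReal := by norm_num
  apply memℓp_gen
  have hs : Summable fun i => (max C 0) ^ (2 : ℝ≥0∞).toReal * ‖z i‖ ^ (2 : ℝ≥0∞).toReal :=
    ((lp.memℓp z).summable h2).mul_left _
  exact hs.of_nonneg_of_le (fun i => Real.rpow_nonneg (norm_nonneg _) _)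
    (fun i => diag_pointwise_bound hC (⇑z) i)

/-- The diagonal operator on `ℓ²(I, ℂ)` with diagonal entries `d i`, bounded by `C`. -/
noncomputable def diagOp (d : I → ℂ) (C : ℝ) (hC : ∀ i, ‖d i‖ ≤ C) :
    lp (fun _ : I => ℂ) 2 →L[ℂ] lp (fun _ : I => ℂ) 2 :=
  LinearMap.mkContinuous
    { toFun := fun z => (⟨fun i => d i * z i, memℓp_diag_mul hC z⟩ : lp (fun _ : I => ℂ) 2)
      map_add' := fun z w => Subtype.ext (funext fun i => mul_add (d i) (z i) (w i))
      map_smul' := fun c z => Subtype.ext (funext fun i => mul_left_comm (d i) c (z i)) }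
    (max C 0)
    (fun z => by
      have h2 : (0 : ℝ) < (2 : ℝ≥0∞).toReal := by norm_num
      apply lp.norm_le_of_tsum_le h2 (by positivity)
      calc (∑' i, ‖d i * z i‖ ^ (2 : ℝ≥0∞).toReal)
          ≤ ∑' i, (max C 0) ^ (2 : ℝ≥0∞).toReal * ‖z i‖ ^ (2 : ℝ≥0∞).toReal :=
            Summable.tsum_le_tsum (fun i => diag_pointwise_bound hC (⇑z) i)
              (((memℓp_diag_mul hC z).summable h2))
              (((lp.memℓp z).summable h2).mul_left _)
        _ = (max C 0) ^ (2 : ℝ≥0∞).toReal * ∑' i, ‖z i‖ ^ (2 : ℝ≥0∞).toReal :=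
            tsum_mul_left
        _ = (max C 0) ^ (2 : ℝ≥0∞).toReal * ‖z‖ ^ (2 : ℝ≥0∞).toReal := by
            rw [lp.norm_rpow_eq_tsum h2]
        _ = (max C 0 * ‖z‖) ^ (2 : ℝ≥0∞).toReal :=
            (Real.mul_rpow (by positivity) (norm_nonneg _)).symm)

@[simp] theorem diagOp_apply (d : I → ℂ) (C : ℝ) (hC : ∀ i, ‖d i‖ ≤ C)
    (z : lp (fun _ : I => ℂ) 2) (i : I) : diagOp d C hC z i = d i * z i := rfl

end DiagOp

section Shift

/-- The underlying sequence map of the unilateral shift: `(z₁, z₂, …) ↦ (0, z₁, z₂, …)`. -/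
def shiftSeq (z : ℕ → ℂ) : ℕ → ℂ
  | 0 => 0
  | n + 1 => z n

theorem memℓp_shiftSeq (z : lp (fun _ : ℕ => ℂ) 2) : Memℓp (shiftSeq ⇑z) 2 := by
  have h2 : (0 : ℝ) < (2 : ℝ≥0∞).toReal := by norm_num
  apply memℓp_gen
  exact (summable_nat_add_iff 1).mp ((lp.memℓp z).summable h2)

theorem tsum_shiftSeq (z : lp (fun _ : ℕ => ℂ) 2) :
    ∑' n, ‖shiftSeq (⇑z) n‖ ^ (2 : ℝ≥0∞).toReal = ∑' n, ‖z n‖ ^ (2 : ℝ≥0∞).toReal := by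
  have h2 : (0 : ℝ) < (2 : ℝ≥0∞).toReal := by norm_num
  have hs : Summable fun n => ‖shiftSeq (⇑z) n‖ ^ (2 : ℝ≥0∞).toReal :=
    (summable_nat_add_iff 1).mp ((lp.memℓp z).summable h2)
  rw [Summable.tsum_eq_zero_add hs]
  simp only [shiftSeq, norm_zero]
  rw [Real.zero_rpow h2.ne', zero_add]

/-- The unilateral shift `S` on `ℓ²(ℕ, ℂ)`: `S(z₁, z₂, …) = (0, z₁, z₂, …)`. -/
noncomputable def shiftOp : lp (fun _ : ℕ => ℂ) 2 →L[ℂ] lp (fun _ : ℕ => ℂ) 2 :=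
  LinearMap.mkContinuous
    { toFun := fun z => (⟨shiftSeq ⇑z, memℓp_shiftSeq z⟩ : lp (fun _ : ℕ => ℂ) 2)
      map_add' := fun z w => Subtype.ext (funext fun n => by
        cases n with
        | zero => exact (add_zero 0).symm
        | succ k => rfl)
      map_smul' := fun c z => Subtype.ext (funext fun n => by
        cases n with
        | zero => exact (smul_zero c).symm
        | succ k => rfl) }
    1
    (fun z => by
      have h2 : (0 : ℝ) < (2 : ℝ≥0∞).toReal := by norm_num
      apply lp.norm_le_of_tsum_le h2 (by positivity)
      calc (∑' n, ‖shiftSeq (⇑z) n‖ ^ (2 : ℝ≥0∞).toReal)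
          = ∑' n, ‖z n‖ ^ (2 : ℝ≥0∞).toReal := tsum_shiftSeq z
        _ = ‖z‖ ^ (2 : ℝ≥0∞).toReal := (lp.norm_rpow_eq_tsum h2 z).symm
        _ = (1 * ‖z‖) ^ (2 : ℝ≥0∞).toReal := by rw [one_mul]
        _ ≤ (1 * ‖z‖) ^ (2 : ℝ≥0∞).toReal := le_rfl)

@[simp] theorem shiftOp_apply_zero (z : lp (fun _ : ℕ => ℂ) 2) : shiftOp z 0 = 0 := rfl

@[simp] theorem shiftOp_apply_succ (z : lp (fun _ : ℕ => ℂ) 2) (n : ℕ) :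
    shiftOp z (n + 1) = z n := rfl

end Shift

section BilateralShift

theorem memℓp_bilshift (z : lp (fun _ : ℤ => ℂ) 2) :
    Memℓp (fun n : ℤ => z (n - 1)) 2 := by
  have h2 : (0 : ℝ) < (2 : ℝ≥0∞).toReal := by norm_num
  apply memℓp_gen
  have h := (lp.memℓp z).summable h2
  have hc : Summable ((fun n : ℤ => ‖z n‖ ^ (2 : ℝ≥0∞).toReal) ∘ ⇑(Equiv.subRight (1 : ℤ))) :=
    (Equiv.subRight (1 : ℤ)).summable_iff.mpr h
  exact hc

/-- The bilateral shift `W` on `ℓ²(ℤ, ℂ)`: `(Wξ)ₙ = ξ_{n-1}`. -/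
noncomputable def bilShiftOp : lp (fun _ : ℤ => ℂ) 2 →L[ℂ] lp (fun _ : ℤ => ℂ) 2 :=
  LinearMap.mkContinuous
    { toFun := fun z => (⟨fun n => z (n - 1), memℓp_bilshift z⟩ : lp (fun _ : ℤ => ℂ) 2)
      map_add' := fun z w => Subtype.ext (funext fun n => rfl)
      map_smul' := fun c z => Subtype.ext (funext fun n => rfl) }
    1
    (fun z => by
      have h2 : (0 : ℝ) < (2 : ℝ≥0∞).toReal := by norm_num
      apply lp.norm_le_of_tsum_le h2 (by positivity)
      calc (∑' n : ℤ, ‖z (n - 1)‖ ^ (2 : ℝ≥0∞).toReal)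
          = ∑' n : ℤ, ‖z n‖ ^ (2 : ℝ≥0∞).toReal :=
            (Equiv.subRight (1 : ℤ)).tsum_eq (fun n => ‖z n‖ ^ (2 : ℝ≥0∞).toReal)
        _ = ‖z‖ ^ (2 : ℝ≥0∞).toReal := (lp.norm_rpow_eq_tsum h2 z).symm
        _ = (1 * ‖z‖) ^ (2 : ℝ≥0∞).toReal := by rw [one_mul]
        _ ≤ (1 * ‖z‖) ^ (2 : ℝ≥0∞).toReal := le_rfl)

@[simp] theorem bilShiftOp_apply (z : lp (fun _ : ℤ => ℂ) 2) (n : ℤ) :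
    bilShiftOp z n = z (n - 1) := rfl

end BilateralShift


/-- The orbit representation `π_x(f)`: the diagonal operator on `ℓ²(ℕ, ℂ)` with entries
`f (φ^[n] x)`, i.e. `(π_x(f)z)ₙ = f(φ^{n-1}(x))·zₙ` in 1-indexed notation. -/
noncomputable def piOp {X : Type*} [TopologicalSpace X] [CompactSpace X]
    (φ : X → X) (x : X) (f : C(X, ℂ)) :
    lp (fun _ : ℕ => ℂ) 2 →L[ℂ] lp (fun _ : ℕ => ℂ) 2 :=
  diagOp (fun n : ℕ => f (φ^[n] x)) ‖f‖ (fun n => f.norm_coe_le_norm _)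

section Aux

open Filter Topology

/-- Extension of a sequence on `ℕ` to `ℤ`, shifted to start at `k`. -/
def extSeq (k : ℤ) (z : ℕ → ℂ) : ℤ → ℂ := fun m => if _ : k ≤ m then z (m - k).toNat else 0

theorem extSeq_add (k : ℤ) (z : ℕ → ℂ) (j : ℕ) : extSeq k z (k + j) = z j := by
  rw [extSeq, dif_pos (by omega)]
  congr 1
  omega

theorem extSeq_of_lt (k : ℤ) (z : ℕ → ℂ) {m : ℤ} (hm : m < k) : extSeq k z m = 0 := by
  rw [extSeq, dif_neg (by omega)]

theorem injAdd (k : ℤ) : Function.Injective (fun j : ℕ => k + (j : ℤ)) := fun a b h => by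
  simpa using h

theorem extSeq_support (k : ℤ) (z : ℕ → ℂ) {m : ℤ}
    (hm : m ∉ Set.range (fun j : ℕ => k + (j : ℤ))) : extSeq k z m = 0 := by
  apply extSeq_of_lt
  by_contra h
  exact hm ⟨(m - k).toNat, show k + (((m - k).toNat : ℕ) : ℤ) = m by omega⟩

theorem memℓp_extSeq (k : ℤ) (z : lp (fun _ : ℕ => ℂ) 2) : Memℓp (extSeq k ⇑z) 2 := by
  have h2 : (0 : ℝ) < (2 : ℝ≥0∞).toReal := by norm_num
  apply memℓp_gen
  refine ((injAdd k).summable_iff ?_).mp ?_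
  · intro m hm
    rw [extSeq_support k _ hm, norm_zero, Real.zero_rpow h2.ne']
  · have : ((fun m : ℤ => ‖extSeq k (⇑z) m‖ ^ (2 : ℝ≥0∞).toReal) ∘ fun j : ℕ => k + (j : ℤ))
        = fun j : ℕ => ‖z j‖ ^ (2 : ℝ≥0∞).toReal := by
      funext j
      show ‖extSeq k (⇑z) (k + (j : ℤ))‖ ^ (2 : ℝ≥0∞).toReal = _
      rw [extSeq_add]
    rw [this]
    exact (lp.memℓp z).summable h2

/-- The isometric embedding `ℓ²(ℕ) → ℓ²(ℤ)` placing a sequence at positions `≥ k`. -/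
noncomputable def extLp (k : ℤ) (z : lp (fun _ : ℕ => ℂ) 2) : lp (fun _ : ℤ => ℂ) 2 :=
  ⟨extSeq k ⇑z, memℓp_extSeq k z⟩

@[simp] theorem extLp_apply (k : ℤ) (z : lp (fun _ : ℕ => ℂ) 2) (m : ℤ) :
    extLp k z m = extSeq k (⇑z) m := rfl

theorem norm_extLp (k : ℤ) (z : lp (fun _ : ℕ => ℂ) 2) : ‖extLp k z‖ = ‖z‖ := by
  have h2 : (0 : ℝ) < (2 : ℝ≥0∞).toReal := by norm_num
  rw [lp.norm_eq_tsum_rpow h2, lp.norm_eq_tsum_rpow h2]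
  congr 1
  rw [← (injAdd k).tsum_eq (f := fun m : ℤ => ‖extLp k z m‖ ^ (2 : ℝ≥0∞).toReal)]
  · refine tsum_congr fun j => ?_
    show ‖(extLp k z : lp (fun _ : ℤ => ℂ) 2) (k + (j : ℤ))‖ ^ (2 : ℝ≥0∞).toReal = _
    rw [extLp_apply, extSeq_add]
  · intro m hm
    simp only [Function.mem_support] at hm
    by_contra hr
    exact hm (by rw [extLp_apply, extSeq_support k _ hr, norm_zero, Real.zero_rpow h2.ne'])

theorem memℓp_restr (k : ℤ) (ξ : lp (fun _ : ℤ => ℂ) 2) :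
    Memℓp (fun j : ℕ => ξ (k + j)) 2 := by
  have h2 : (0 : ℝ) < (2 : ℝ≥0∞).toReal := by norm_num
  apply memℓp_gen
  exact ((lp.memℓp ξ).summable h2).comp_injective (injAdd k)

/-- Restriction `ℓ²(ℤ) → ℓ²(ℕ)` to positions `≥ k`. -/
noncomputable def restrLp (k : ℤ) (ξ : lp (fun _ : ℤ => ℂ) 2) : lp (fun _ : ℕ => ℂ) 2 :=
  ⟨fun j : ℕ => ξ (k + j), memℓp_restr k ξ⟩

theorem extLp_restrLp (k : ℤ) (ξ : lp (fun _ : ℤ => ℂ) 2)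
    (hξ : ∀ m : ℤ, m < k → ξ m = 0) : extLp k (restrLp k ξ) = ξ := by
  apply Subtype.ext
  funext m
  show extSeq k _ m = ξ m
  by_cases h : k ≤ m
  · rw [extSeq, dif_pos h]
    show ξ (k + ((m - k).toNat : ℤ)) = ξ m
    have hkm : k + (((m - k).toNat : ℕ) : ℤ) = m := by omega
    rw [hkm]
  · rw [extSeq, dif_neg h, hξ m (by omega)]

theorem bilShiftOp_pow_apply (n : ℕ) (z : lp (fun _ : ℤ => ℂ) 2) (m : ℤ) :
    ((bilShiftOp ^ n) z) m = z (m - n) := by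
  induction n generalizing m with
  | zero => simp
  | succ n ih =>
    rw [pow_succ', ContinuousLinearMap.mul_apply, bilShiftOp_apply, ih]
    congr 1
    push_cast
    ring

theorem shiftOp_pow_apply (n : ℕ) (z : lp (fun _ : ℕ => ℂ) 2) (j : ℕ) :
    ((shiftOp ^ n) z) j = if n ≤ j then z (j - n) else 0 := by
  induction n generalizing j with
  | zero => simp
  | succ n ih =>
    rw [pow_succ', ContinuousLinearMap.mul_apply]
    cases j with
    | zero => rw [shiftOp_apply_zero, if_neg (by omega)]
    | succ j =>
      rw [shiftOp_apply_succ, ih]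
      by_cases h : n ≤ j
      · rw [if_pos h, if_pos (by omega), Nat.succ_sub_succ]
      · rw [if_neg h, if_neg (by omega)]

variable {X : Type*} [TopologicalSpace X] [CompactSpace X]

theorem orbit_iterate (φ : X ≃ₜ X) (x : X) (k : ℤ) (j : ℕ) :
    (⇑φ)^[j] ((φ.toEquiv ^ k) x) = (φ.toEquiv ^ (k + (j : ℤ))) x := by
  have h1 : (⇑φ)^[j] = ⇑(φ.toEquiv ^ j) := Equiv.Perm.iterate_eq_pow φ.toEquiv j
  rw [h1, add_comm, zpow_add, zpow_natCast, Equiv.Perm.mul_apply]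

theorem key_identity (φ : X ≃ₜ X) (x : X) (N : ℕ) (f : ℕ → C(X, ℂ)) (k : ℤ)
    (z : lp (fun _ : ℕ => ℂ) 2) :
    (∑ n ∈ Finset.range (N + 1),
        (bilShiftOp ^ n).comp
          (diagOp (fun k : ℤ => f n ((φ.toEquiv ^ k) x)) ‖f n‖
            (fun k => (f n).norm_coe_le_norm _))) (extLp k z)
      = extLp k
        ((∑ n ∈ Finset.range (N + 1),
            (shiftOp ^ n).comp (piOp ⇑φ ((φ.toEquiv ^ k) x) (f n))) z) := by
  apply Subtype.ext
  funext m
  rw [ContinuousLinearMap.sum_apply, lp.coeFn_sum, Finset.sum_apply]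
  show _ = extSeq k _ m
  by_cases hm : k ≤ m
  · rw [extSeq, dif_pos hm]
    set j : ℕ := (m - k).toNat with hj
    have hmk : m = k + j := by omega
    show _ = ((∑ n ∈ Finset.range (N + 1),
        (shiftOp ^ n).comp (piOp ⇑φ ((φ.toEquiv ^ k) x) (f n))) z) j
    rw [ContinuousLinearMap.sum_apply, lp.coeFn_sum, Finset.sum_apply]
    refine Finset.sum_congr rfl fun n _ => ?_
    rw [ContinuousLinearMap.comp_apply, ContinuousLinearMap.comp_apply,
      bilShiftOp_pow_apply, shiftOp_pow_apply, diagOp_apply]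
    by_cases hnj : n ≤ j
    · rw [if_pos hnj, piOp, diagOp_apply, orbit_iterate]
      have h1 : ((extLp k z : lp (fun _ : ℤ => ℂ) 2) : ℤ → ℂ) (m - n) = z (j - n) := by
        have : m - (n : ℤ) = k + ((j - n : ℕ) : ℤ) := by omega
        rw [extLp_apply, this, extSeq_add]
      have h2 : k + ((j - n : ℕ) : ℤ) = m - n := by omega
      rw [h1, h2]
    · rw [if_neg hnj]
      have h1 : ((extLp k z : lp (fun _ : ℤ => ℂ) 2) : ℤ → ℂ) (m - n) = 0 := by
        rw [extLp_apply]
        exact extSeq_of_lt k _ (by omega)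
      rw [h1, mul_zero]
  · rw [extSeq, dif_neg hm]
    refine Finset.sum_eq_zero fun n _ => ?_
    rw [ContinuousLinearMap.comp_apply, bilShiftOp_pow_apply, diagOp_apply]
    have h1 : ((extLp k z : lp (fun _ : ℤ => ℂ) 2) : ℤ → ℂ) (m - n) = 0 := by
      rw [extLp_apply]
      exact extSeq_of_lt k _ (by omega)
    rw [h1, mul_zero]

theorem norm_A_le (φ : X ≃ₜ X) (x : X) (N : ℕ) (f : ℕ → C(X, ℂ)) (k : ℤ) :
    ‖∑ n ∈ Finset.range (N + 1),
        (shiftOp ^ n).comp (piOp ⇑φ ((φ.toEquiv ^ k) x) (f n))‖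
      ≤ ‖∑ n ∈ Finset.range (N + 1),
          (bilShiftOp ^ n).comp
            (diagOp (fun k : ℤ => f n ((φ.toEquiv ^ k) x)) ‖f n‖
              (fun k => (f n).norm_coe_le_norm _))‖ := by
  refine ContinuousLinearMap.opNorm_le_bound _ (norm_nonneg _) fun z => ?_
  calc ‖(∑ n ∈ Finset.range (N + 1),
        (shiftOp ^ n).comp (piOp ⇑φ ((φ.toEquiv ^ k) x) (f n))) z‖
      = ‖extLp k ((∑ n ∈ Finset.range (N + 1),
          (shiftOp ^ n).comp (piOp ⇑φ ((φ.toEquiv ^ k) x) (f n))) z)‖ :=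
        (norm_extLp _ _).symm
    _ = ‖(∑ n ∈ Finset.range (N + 1),
          (bilShiftOp ^ n).comp
            (diagOp (fun k : ℤ => f n ((φ.toEquiv ^ k) x)) ‖f n‖
              (fun k => (f n).norm_coe_le_norm _))) (extLp k z)‖ := by
        rw [key_identity]
    _ ≤ ‖∑ n ∈ Finset.range (N + 1),
          (bilShiftOp ^ n).comp
            (diagOp (fun k : ℤ => f n ((φ.toEquiv ^ k) x)) ‖f n‖
              (fun k => (f n).norm_coe_le_norm _))‖ * ‖extLp k z‖ :=
        ContinuousLinearMap.le_opNorm _ _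
    _ = _ * ‖z‖ := by rw [norm_extLp]

theorem norm_T_apply_le (φ : X ≃ₜ X) (x : X) (N : ℕ) (f : ℕ → C(X, ℂ)) (k : ℤ)
    (ξ : lp (fun _ : ℤ => ℂ) 2) (hξ : ∀ m : ℤ, m < k → ξ m = 0) :
    ‖(∑ n ∈ Finset.range (N + 1),
        (bilShiftOp ^ n).comp
          (diagOp (fun k : ℤ => f n ((φ.toEquiv ^ k) x)) ‖f n‖
            (fun k => (f n).norm_coe_le_norm _))) ξ‖
      ≤ ‖∑ n ∈ Finset.range (N + 1),
          (shiftOp ^ n).comp (piOp ⇑φ ((φ.toEquiv ^ k) x) (f n))‖ * ‖ξ‖ := by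
  rw [← extLp_restrLp k ξ hξ, key_identity, norm_extLp, norm_extLp]
  exact ContinuousLinearMap.le_opNorm _ _

end Aux

/-- For `φ` a homeomorphism of a nonempty compact Hausdorff space `X`,
`x ∈ X` and `f₀, …, f_N ∈ C(X, ℂ)`:
`‖Σₙ Wⁿ Π_x(fₙ)‖ = sup { ‖Σₙ Sⁿ π_y(fₙ)‖ : y = φᵏ(x), k ∈ ℤ }`,
where `W` is the bilateral shift on `ℓ²(ℤ)` and `Π_x(f)` is the diagonal operator
`(Π_x(f)ξ)ₙ = f(φⁿ(x))·ξₙ`, `n ∈ ℤ`. -/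
theorem norm_bilateral_eq_sup_orbit
    {X : Type*} [TopologicalSpace X] [CompactSpace X] [T2Space X] [Nonempty X]
    (φ : X ≃ₜ X) (x : X) (N : ℕ) (f : ℕ → C(X, ℂ)) :
    ‖∑ n ∈ Finset.range (N + 1),
        (bilShiftOp ^ n).comp
          (diagOp (fun k : ℤ => f n ((φ.toEquiv ^ k) x)) ‖f n‖
            (fun k => (f n).norm_coe_le_norm _))‖ =
    sSup {r : ℝ | ∃ k : ℤ,
      r = ‖∑ n ∈ Finset.range (N + 1),
            (shiftOp ^ n).comp (piOp ⇑φ ((φ.toEquiv ^ k) x) (f n))‖} := by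
  set T := ∑ n ∈ Finset.range (N + 1),
      (bilShiftOp ^ n).comp
        (diagOp (fun k : ℤ => f n ((φ.toEquiv ^ k) x)) ‖f n‖
          (fun k => (f n).norm_coe_le_norm _)) with hT
  set A : ℤ → _ := fun k => ∑ n ∈ Finset.range (N + 1),
      (shiftOp ^ n).comp (piOp ⇑φ ((φ.toEquiv ^ k) x) (f n)) with hA
  set Sset : Set ℝ := {r : ℝ | ∃ k : ℤ, r = ‖A k‖} with hSset
  have hub : ∀ r ∈ Sset, r ≤ ‖T‖ := by
    rintro r ⟨k, rfl⟩
    exact norm_A_le φ x N f k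
  have hbdd : BddAbove Sset := ⟨‖T‖, hub⟩
  have hmem : ‖A 0‖ ∈ Sset := ⟨0, rfl⟩
  have hSup0 : (0 : ℝ) ≤ sSup Sset := (norm_nonneg _).trans (le_csSup hbdd hmem)
  refine le_antisymm ?_ (Real.sSup_le hub (norm_nonneg _))
  refine ContinuousLinearMap.opNorm_le_bound _ hSup0 fun ξ => ?_
  have hsum : HasSum (fun i : ℤ => lp.single 2 i (ξ i)) ξ :=
    lp.hasSum_single (by norm_num) ξ
  have h1 : Filter.Tendsto (fun F : Finset ℤ => ‖T (∑ i ∈ F, lp.single 2 i (ξ i))‖)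
      Filter.atTop (nhds ‖T ξ‖) :=
    ((T.continuous.tendsto ξ).comp hsum).norm
  have h2 : Filter.Tendsto (fun F : Finset ℤ => sSup Sset * ‖∑ i ∈ F, lp.single 2 i (ξ i)‖)
      Filter.atTop (nhds (sSup Sset * ‖ξ‖)) :=
    hsum.norm.const_mul _
  refine le_of_tendsto_of_tendsto' h1 h2 fun F => ?_
  obtain ⟨k, hk⟩ := F.finite_toSet.bddBelow
  have hvan : ∀ m : ℤ, m < k → (∑ i ∈ F, lp.single 2 i (ξ i)) m = 0 := by
    intro m hm
    rw [lp.coeFn_sum, Finset.sum_apply]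
    refine Finset.sum_eq_zero fun i hi => ?_
    refine lp.single_apply_ne 2 i _ ?_
    intro h
    exact absurd (hk hi) (by omega)
  calc ‖T (∑ i ∈ F, lp.single 2 i (ξ i))‖
      ≤ ‖A k‖ * ‖∑ i ∈ F, lp.single 2 i (ξ i)‖ :=
        norm_T_apply_le φ x N f k _ hvan
    _ ≤ sSup Sset * ‖∑ i ∈ F, lp.single 2 i (ξ i)‖ :=
        mul_le_mul_of_nonneg_right (le_csSup hbdd ⟨k, rfl⟩) (norm_nonneg _)
end

section
/- Let X be a nonempty compact Hausdorff space, φ : X → X a continuous surjection, and (xₙ)_{n≥1} a backward orbit: φ(xₙ₊₁) = xₙ for all n ≥ 1, with the points xₙ pairwise distinct. Then the operators S and π_𝒪(f) on ℓ²(ℕ, ℂ) satisfy the covariance relation S ∘ π_𝒪(f) = π_𝒪(f ∘ φ) ∘ S for every f ∈ C(X, ℂ), and the collection of closed subspaces of ℓ²(ℕ, ℂ) invariant under S and under π_𝒪(f) for every f ∈ C(X, ℂ) is totally ordered by inclusion; that is, the orbit representation π_𝒪 is a nest representation satisfying π_𝒪(U)π_𝒪(f) = π_𝒪(f∘φ)π_𝒪(U).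 -/
open scoped ENNReal

/-- The orbit representation `π_𝒪(f)` attached to a backward orbit `𝒪 = (x₁, x₂, …)`
(with `φ(xₙ₊₁) = xₙ`): the diagonal operator `(π_𝒪(f)z)ₙ = f(xₙ)·zₙ` on `ℓ²(ℕ, ℂ)`. -/
noncomputable def orbitOp {X : Type*} [TopologicalSpace X] [CompactSpace X]
    (x : ℕ → X) (f : C(X, ℂ)) :
    lp (fun _ : ℕ => ℂ) 2 →L[ℂ] lp (fun _ : ℕ => ℂ) 2 :=
  diagOp (fun n : ℕ => f (x n)) ‖f‖ (fun n => f.norm_coe_le_norm _)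

section NestAux

open Filter Topology

theorem orbitOp_apply {X : Type*} [TopologicalSpace X] [CompactSpace X]
    (x : ℕ → X) (f : C(X, ℂ)) (z : lp (fun _ : ℕ => ℂ) 2) (n : ℕ) :
    orbitOp x f z n = f (x n) * z n := rfl

theorem shiftOp_single (m : ℕ) (c : ℂ) :
    shiftOp (lp.single 2 m c) = lp.single 2 (m + 1) c := by
  apply lp.ext
  funext n
  cases n with
  | zero =>
      rw [shiftOp_apply_zero]
      exact (lp.single_apply_ne (E := fun _ : ℕ => ℂ) 2 (m + 1) c
        (show (0 : ℕ) ≠ m + 1 by omega)).symm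
  | succ k =>
      rw [shiftOp_apply_succ]
      by_cases h : k = m
      · subst h
        rw [lp.single_apply_self (E := fun _ : ℕ => ℂ),
          lp.single_apply_self (E := fun _ : ℕ => ℂ)]
      · rw [lp.single_apply_ne (E := fun _ : ℕ => ℂ) 2 m c h,
          lp.single_apply_ne (E := fun _ : ℕ => ℂ) 2 (m + 1) c (show k + 1 ≠ m + 1 by omega)]

theorem lp_single_zero (n : ℕ) : (lp.single 2 n (0 : ℂ) : lp (fun _ : ℕ => ℂ) 2) = 0 := by
  rw [show (0 : ℂ) = (0 : ℂ) • (1 : ℂ) by simp, lp.single_smul, zero_smul]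

/-- If a closed subspace invariant under all `orbitOp`s contains an element with nonzero
`m`-th coordinate, it contains the `m`-th standard basis vector. -/
theorem single_mem_of_ne_zero {X : Type*} [TopologicalSpace X] [CompactSpace X] [T2Space X]
    (x : ℕ → X) (hinj : Function.Injective x)
    {K : Submodule ℂ (lp (fun _ : ℕ => ℂ) 2)}
    (hKc : IsClosed (K : Set (lp (fun _ : ℕ => ℂ) 2)))
    (hKd : ∀ f : C(X, ℂ), ∀ z ∈ K, orbitOp x f z ∈ K)
    {z : lp (fun _ : ℕ => ℂ) 2} (hz : z ∈ K) {m : ℕ} (hm : z m ≠ 0) :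
    lp.single 2 m (1 : ℂ) ∈ K := by
  have h2 : (0 : ℝ) < (2 : ℝ≥0∞).toReal := by norm_num
  have hsum : Summable fun n => ‖z n‖ ^ (2 : ℝ≥0∞).toReal := (lp.memℓp z).summable h2
  set u : lp (fun _ : ℕ => ℂ) 2 := (lp.single 2 m (z m) : lp (fun _ : ℕ => ℂ) 2) with hu
  set tail : ℕ → ℝ := fun N => ∑' k, ‖z (k + (N + 1))‖ ^ (2 : ℝ≥0∞).toReal with htail_def
  have htail_nonneg : ∀ N, 0 ≤ tail N := fun N =>
    tsum_nonneg fun k => Real.rpow_nonneg (norm_nonneg _) _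
  have key : ∀ N : ℕ, ∃ w, w ∈ K ∧ ‖w - u‖ ≤ Real.sqrt (tail N) := by
    intro N
    have hsfin : ({n : ℕ | n ≤ N ∧ n ≠ m}).Finite :=
      (Set.finite_Iic N).subset fun n hn => hn.1
    have hsx : IsClosed (x '' {n | n ≤ N ∧ n ≠ m}) := (hsfin.image x).isClosed
    have hdisj : Disjoint (x '' {n | n ≤ N ∧ n ≠ m}) ({x m} : Set X) := by
      rw [Set.disjoint_left]
      rintro p ⟨n, ⟨-, hne⟩, rfl⟩ hp
      exact hne (hinj (by simpa using hp))
    obtain ⟨f, hf0, hf1, hf01⟩ :=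
      exists_continuous_zero_one_of_isClosed hsx isClosed_singleton hdisj
    set g : C(X, ℂ) := ⟨fun p => ((f p : ℝ) : ℂ), Complex.continuous_ofReal.comp f.continuous⟩
      with hg
    refine ⟨orbitOp x g z, hKd g z hz, ?_⟩
    set t' : ℕ → ℝ := fun n => if n ≤ N then 0 else ‖z n‖ ^ (2 : ℝ≥0∞).toReal with ht'
    have ht'_nonneg : ∀ n, 0 ≤ t' n := by
      intro n; simp only [ht']
      split
      · exact le_refl 0
      · exact Real.rpow_nonneg (norm_nonneg _) _
    have ht'_le : ∀ n, t' n ≤ ‖z n‖ ^ (2 : ℝ≥0∞).toReal := by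
      intro n; simp only [ht']
      split
      · exact Real.rpow_nonneg (norm_nonneg _) _
      · exact le_refl _
    have ht'_summable : Summable t' := hsum.of_nonneg_of_le ht'_nonneg ht'_le
    have hgle : ∀ p, ‖g p‖ ≤ 1 := by
      intro p
      have h01 := hf01 p
      simp only [hg, ContinuousMap.coe_mk, Complex.norm_real, Real.norm_eq_abs]
      rw [abs_of_nonneg h01.1]
      exact h01.2
    have coord : ∀ n,
        ‖(orbitOp x g z - u) n‖ ^ (2 : ℝ≥0∞).toReal ≤ t' n := by
      intro n
      have hcoe : (orbitOp x g z - u) n = g (x n) * z n - u n := by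
        rw [lp.coeFn_sub]; rfl
      by_cases hnm : n = m
      · subst hnm
        have hg1 : g (x n) = 1 := by
          have := hf1 (Set.mem_singleton (x n))
          simp only [hg, ContinuousMap.coe_mk]
          rw [show f (x n) = 1 from this]
          norm_num
        have : (orbitOp x g z - u) n = 0 := by
          rw [hcoe, hg1, one_mul, hu, lp.single_apply_self (E := fun _ : ℕ => ℂ), sub_self]
        rw [this, norm_zero, Real.zero_rpow h2.ne']
        exact ht'_nonneg n
      · have hun : u n = 0 := by rw [hu]; exact lp.single_apply_ne (E := fun _ : ℕ => ℂ) 2 m (z m) hnm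
        by_cases hn : n ≤ N
        · have hg0 : g (x n) = 0 := by
            have := hf0 ⟨n, ⟨hn, hnm⟩, rfl⟩
            simp only [hg, ContinuousMap.coe_mk]
            rw [show f (x n) = 0 from this]
            norm_num
          have : (orbitOp x g z - u) n = 0 := by
            rw [hcoe, hg0, zero_mul, hun, sub_zero]
          rw [this, norm_zero, Real.zero_rpow h2.ne']
          exact ht'_nonneg n
        · have hval : (orbitOp x g z - u) n = g (x n) * z n := by
            rw [hcoe, hun, sub_zero]
          have hle : ‖(orbitOp x g z - u) n‖ ≤ ‖z n‖ := by
            rw [hval, norm_mul]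
            calc ‖g (x n)‖ * ‖z n‖ ≤ 1 * ‖z n‖ :=
                  mul_le_mul_of_nonneg_right (hgle _) (norm_nonneg _)
              _ = ‖z n‖ := one_mul _
          simp only [ht', if_neg hn]
          exact Real.rpow_le_rpow (norm_nonneg _) hle h2.le
    have htsum_t' : ∑' n, t' n = tail N := by
      have hadd := Summable.sum_add_tsum_nat_add (N + 1) ht'_summable
      have hzero : ∑ i ∈ Finset.range (N + 1), t' i = 0 := by
        apply Finset.sum_eq_zero
        intro i hi
        have : i ≤ N := by
          have := Finset.mem_range.mp hi; omega
        simp [ht', this]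
      have heq : ∀ i, t' (i + (N + 1)) = ‖z (i + (N + 1))‖ ^ (2 : ℝ≥0∞).toReal := by
        intro i
        simp [ht', show ¬(i + (N + 1) ≤ N) by omega]
      rw [hzero, zero_add] at hadd
      rw [← hadd, htail_def]
      exact tsum_congr heq
    apply lp.norm_le_of_tsum_le h2 (Real.sqrt_nonneg _)
    have hsq : Real.sqrt (tail N) ^ (2 : ℝ≥0∞).toReal = tail N := by
      rw [show (2 : ℝ≥0∞).toReal = ((2 : ℕ) : ℝ) by norm_num, Real.rpow_natCast,
        Real.sq_sqrt (htail_nonneg N)]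
    rw [hsq]
    calc (∑' n, ‖(orbitOp x g z - u) n‖ ^ (2 : ℝ≥0∞).toReal)
        ≤ ∑' n, t' n :=
          Summable.tsum_le_tsum coord ((lp.memℓp (orbitOp x g z - u)).summable h2) ht'_summable
      _ = tail N := htsum_t'
  choose w hwK hwb using key
  have htail0 : Tendsto tail atTop (𝓝 0) := by
    have hps : Tendsto (fun N : ℕ => ∑ i ∈ Finset.range (N + 1),
        ‖z i‖ ^ (2 : ℝ≥0∞).toReal) atTop (𝓝 (∑' n, ‖z n‖ ^ (2 : ℝ≥0∞).toReal)) :=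
      (hsum.hasSum.tendsto_sum_nat).comp (tendsto_add_atTop_nat 1)
    have hdiff : Tendsto (fun N : ℕ => (∑' n, ‖z n‖ ^ (2 : ℝ≥0∞).toReal) -
        ∑ i ∈ Finset.range (N + 1), ‖z i‖ ^ (2 : ℝ≥0∞).toReal) atTop (𝓝 0) := by
      have h := hps.const_sub (∑' n, ‖z n‖ ^ (2 : ℝ≥0∞).toReal)
      rwa [sub_self] at h
    have heq : ∀ N, tail N = (∑' n, ‖z n‖ ^ (2 : ℝ≥0∞).toReal) -
        ∑ i ∈ Finset.range (N + 1), ‖z i‖ ^ (2 : ℝ≥0∞).toReal := by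
      intro N
      have := Summable.sum_add_tsum_nat_add (f := fun n => ‖z n‖ ^ (2 : ℝ≥0∞).toReal)
        (N + 1) hsum
      rw [htail_def]
      linarith
    rw [funext heq]
    exact hdiff
  have hb : Tendsto (fun N => Real.sqrt (tail N)) atTop (𝓝 0) := by
    have := (Real.continuous_sqrt.tendsto 0).comp htail0
    rw [Real.sqrt_zero] at this
    exact this
  have hw0 : Tendsto (fun N => w N - u) atTop (𝓝 0) := squeeze_zero_norm hwb hb
  have hwu : Tendsto w atTop (𝓝 u) := by
    rwa [tendsto_sub_nhds_zero_iff] at hw0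
  have huK : u ∈ K := hKc.mem_of_tendsto hwu (Filter.Eventually.of_forall hwK)
  have hmem : (z m)⁻¹ • u ∈ K := K.smul_mem _ huK
  have : lp.single 2 m (1 : ℂ) = (z m)⁻¹ • u := by
    rw [hu, ← lp.single_smul, smul_eq_mul, inv_mul_cancel₀ hm]
  rwa [this]

/-- If a closed shift-invariant subspace contains the `m`-th basis vector, it contains
every element supported on coordinates `≥ m`. -/
theorem mem_of_single_mem {K : Submodule ℂ (lp (fun _ : ℕ => ℂ) 2)}
    (hKc : IsClosed (K : Set (lp (fun _ : ℕ => ℂ) 2)))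
    (hKs : ∀ z ∈ K, shiftOp z ∈ K) {m : ℕ} (hm : lp.single 2 m (1 : ℂ) ∈ K)
    {z : lp (fun _ : ℕ => ℂ) 2} (hz : ∀ n < m, z n = 0) : z ∈ K := by
  have hsingle : ∀ n, m ≤ n → lp.single 2 n (1 : ℂ) ∈ K := by
    intro n hn
    induction n, hn using Nat.le_induction with
    | base => exact hm
    | succ k hk ih =>
        rw [← shiftOp_single]
        exact hKs _ ih
  have hterm : ∀ n, lp.single 2 n (z n) ∈ K := by
    intro n
    rcases lt_or_ge n m with h | h
    · rw [hz n h, lp_single_zero]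
      exact K.zero_mem
    · have heq : (lp.single 2 n (z n) : lp (fun _ : ℕ => ℂ) 2) =
          z n • (lp.single 2 n (1 : ℂ) : lp (fun _ : ℕ => ℂ) 2) := by
        rw [← lp.single_smul, smul_eq_mul, mul_one]
      rw [heq]
      exact K.smul_mem _ (hsingle n h)
  have hhs : HasSum (fun n => lp.single 2 n (z n)) z :=
    lp.hasSum_single (by norm_num) z
  exact hKc.mem_of_tendsto hhs
    (Filter.Eventually.of_forall fun s => K.sum_mem fun i _ => hterm i)

end NestAux

/-- For a backward orbit `𝒪 = (x₁, x₂, …)` of pairwise distinct points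
(`φ(xₙ₊₁) = xₙ`), the orbit representation `π_𝒪` satisfies the covariance relation
`π_𝒪(U) π_𝒪(f) = π_𝒪(f∘φ) π_𝒪(U)` for every `f ∈ C(X, ℂ)`, and its lattice of invariant
closed subspaces of `ℓ²(ℕ, ℂ)` is totally ordered by inclusion; i.e. `π_𝒪` is a nest
representation. -/
theorem orbit_representation_nest
    {X : Type*} [TopologicalSpace X] [CompactSpace X] [T2Space X] [Nonempty X]
    (φ : X → X) (hφ : Continuous φ) (hφs : Function.Surjective φ)
    (x : ℕ → X) (hx : ∀ n : ℕ, φ (x (n + 1)) = x n) (hinj : Function.Injective x) :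
    (∀ f : C(X, ℂ),
      shiftOp.comp (orbitOp x f) =
        (orbitOp x (f.comp ⟨φ, hφ⟩)).comp shiftOp) ∧
    (∀ K L : Submodule ℂ (lp (fun _ : ℕ => ℂ) 2),
      (IsClosed (K : Set (lp (fun _ : ℕ => ℂ) 2)) ∧ (∀ z ∈ K, shiftOp z ∈ K) ∧
        ∀ f : C(X, ℂ), ∀ z ∈ K, orbitOp x f z ∈ K) →
      (IsClosed (L : Set (lp (fun _ : ℕ => ℂ) 2)) ∧ (∀ z ∈ L, shiftOp z ∈ L) ∧
        ∀ f : C(X, ℂ), ∀ z ∈ L, orbitOp x f z ∈ L) →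
      K ≤ L ∨ L ≤ K) := by
  classical
  constructor
  · intro f
    apply ContinuousLinearMap.ext
    intro z
    refine lp.ext (funext fun n => ?_)
    simp only [ContinuousLinearMap.comp_apply]
    cases n with
    | zero =>
        rw [shiftOp_apply_zero, orbitOp_apply, shiftOp_apply_zero, mul_zero]
    | succ k =>
        rw [shiftOp_apply_succ, orbitOp_apply, orbitOp_apply, shiftOp_apply_succ]
        simp [hx k]
  · intro K L hK hL
    obtain ⟨hKc, hKs, hKd⟩ := hK
    obtain ⟨hLc, hLs, hLd⟩ := hL
    by_cases hK0 : ∃ n, ∃ z ∈ K, z n ≠ 0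
    swap
    · left
      intro z hz
      push_neg at hK0
      have : z = 0 := lp.ext (funext fun n => by simp [hK0 n z hz])
      rw [this]
      exact L.zero_mem
    by_cases hL0 : ∃ n, ∃ w ∈ L, w n ≠ 0
    swap
    · right
      intro w hw
      push_neg at hL0
      have : w = 0 := lp.ext (funext fun n => by simp [hL0 n w hw])
      rw [this]
      exact K.zero_mem
    obtain ⟨zK, hzK, hzKm⟩ := Nat.find_spec hK0
    obtain ⟨zL, hzL, hzLm⟩ := Nat.find_spec hL0
    have heK : lp.single 2 (Nat.find hK0) (1 : ℂ) ∈ K :=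
      single_mem_of_ne_zero x hinj hKc hKd hzK hzKm
    have heL : lp.single 2 (Nat.find hL0) (1 : ℂ) ∈ L :=
      single_mem_of_ne_zero x hinj hLc hLd hzL hzLm
    rcases le_total (Nat.find hK0) (Nat.find hL0) with h | h
    · right
      intro w hw
      apply mem_of_single_mem hKc hKs heK
      intro n hn
      by_contra hne
      have : Nat.find hL0 ≤ n := Nat.find_le ⟨w, hw, hne⟩
      omega
    · left
      intro w hw
      apply mem_of_single_mem hLc hLs heL
      intro n hn
      by_contra hne
      have : Nat.find hK0 ≤ n := Nat.find_le ⟨w, hw, hne⟩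
      omega
end
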